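/- arXiv:1503.06720 — 2 statements merged into one kernel-verified Lean document; each statement's English description precedes it below -/
import Mathlib

section
/- Suppose a_1,…,a_m are 𝔠-profiles that pairwise have no colors in common (if a color d appears in a_j then it appears in no a_i with i ≠ j), and a is any profile in the orbit of the concatenation (a_1,…,a_m). Then there is exactly one order-preserving map from (a_1,…,a_m) to a. -/
section OrdMap

variable {𝔠 : Type*} [DecidableEq 𝔠] {n N : ℕ} (c : Fin n → 𝔠) (a : Fin N → 𝔠) (d : 𝔠)
  (h : Fintype.card {i : Fin n // c i = d} = Fintype.card {p : Fin N // a p = d})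

noncomputable def ordMap (s : {i : Fin n // c i = d}) : Fin N :=
  ((monoEquivOfFin {p : Fin N // a p = d} rfl)
    (finCongr h ((monoEquivOfFin {i : Fin n // c i = d} rfl).symm s))).1

theorem ordMap_color (s) : a (ordMap c a d h s) = d :=
  ((monoEquivOfFin {p : Fin N // a p = d} rfl)
    (finCongr h ((monoEquivOfFin {i : Fin n // c i = d} rfl).symm s))).2

theorem ordMap_strictMono {s s' : {i : Fin n // c i = d}} (hss : s.1 < s'.1) :
    ordMap c a d h s < ordMap c a d h s' := by
  have h1 : s < s' := Subtype.mk_lt_mk.mpr hss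
  have h2 := (monoEquivOfFin {i : Fin n // c i = d} rfl).symm.strictMono h1
  have h3 : finCongr h ((monoEquivOfFin {i : Fin n // c i = d} rfl).symm s)
      < finCongr h ((monoEquivOfFin {i : Fin n // c i = d} rfl).symm s') := h2
  exact (monoEquivOfFin {p : Fin N // a p = d} rfl).strictMono h3

theorem ordMap_inj {s s'} (hss : ordMap c a d h s = ordMap c a d h s') : s = s' := by
  rcases lt_trichotomy s.1 s'.1 with hl | he | hl
  · exact absurd hss (ordMap_strictMono c a d h hl).ne
  · exact Subtype.ext he
  · exact absurd hss.symm (ordMap_strictMono c a d h hl).ne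

theorem ordMap_congr {d' : 𝔠} (hd : d = d') {h'} {s s'} (hss : s.1 = s'.1) :
    ordMap c a d h s = ordMap c a d' h' s' := by
  subst hd
  cases Subtype.ext hss
  rfl

end OrdMap

/-- If the blocks `b j : Fin (k j) → 𝔠` pairwise have no colors in common, then for any
profile `a` in the orbit of their concatenation there is exactly one order-preserving map
from the concatenation `(a_1,…,a_m)` to `a`. -/
theorem stmt3 {𝔠 : Type*} [Nonempty 𝔠] {m : ℕ} (k : Fin m → ℕ)
    (b : ∀ j : Fin m, Fin (k j) → 𝔠)
    (hdisj : ∀ (j j' : Fin m), j ≠ j' → ∀ (i : Fin (k j)) (i' : Fin (k j')),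
      b j i ≠ b j' i')
    {N : ℕ} (a : Fin N → 𝔠)
    (horbit : ∃ τ : (Σ j : Fin m, Fin (k j)) ≃ Fin N, ∀ j i, a (τ ⟨j, i⟩) = b j i) :
    ∃! σ : (Σ j : Fin m, Fin (k j)) ≃ Fin N,
      (∀ j i, a (σ ⟨j, i⟩) = b j i) ∧
      (∀ (j : Fin m) (i i' : Fin (k j)), i < i' → b j i = b j i' →
        σ ⟨j, i⟩ < σ ⟨j, i'⟩) := by
  classical
  obtain ⟨τ, hτ⟩ := horbit
  have hblock : ∀ (j j' : Fin m) (i : Fin (k j)) (i' : Fin (k j')),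
      b j i = b j' i' → j = j' := by
    intro j j' i i' h
    by_contra hne
    exact hdisj j j' hne i i' h
  -- cardinality of each color class matches
  have hcard : ∀ (j : Fin m) (i0 : Fin (k j)),
      Fintype.card {i : Fin (k j) // b j i = b j i0}
        = Fintype.card {p : Fin N // a p = b j i0} := by
    intro j i0
    apply Fintype.card_congr
    refine Equiv.ofBijective
      (fun s => ⟨τ ⟨j, s.1⟩, by rw [hτ]; exact s.2⟩) ⟨?_, ?_⟩
    · intro s s' hss
      have h1 : τ ⟨j, s.1⟩ = τ ⟨j, s'.1⟩ := congrArg Subtype.val hss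
      have h2 := τ.injective h1
      exact Subtype.ext (eq_of_heq (Sigma.mk.inj_iff.mp h2).2)
    · rintro ⟨p, hp⟩
      obtain ⟨⟨j', i'⟩, hx⟩ : ∃ x, τ x = p := ⟨τ.symm p, τ.apply_symm_apply p⟩
      have hb : b j' i' = b j i0 := by rw [← hτ j' i', hx, hp]
      obtain rfl := hblock j' j i' i0 hb
      exact ⟨⟨i', hb⟩, Subtype.ext hx⟩
  set f : (Σ j : Fin m, Fin (k j)) → Fin N :=
    fun x => ordMap (b x.1) a (b x.1 x.2) (hcard x.1 x.2) ⟨x.2, rfl⟩ with hf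
  have hfa : ∀ j i, a (f ⟨j, i⟩) = b j i := fun j i =>
    ordMap_color (b j) a (b j i) (hcard j i) ⟨i, rfl⟩
  have hinj : Function.Injective f := by
    rintro ⟨j, i⟩ ⟨j', i'⟩ hxy
    have hcc : b j i = b j' i' := by rw [← hfa j i, ← hfa j' i', hxy]
    obtain rfl := hblock j j' i i' hcc
    have h2 : ordMap (b j) a (b j i) (hcard j i) ⟨i', hcc.symm⟩
        = ordMap (b j) a (b j i') (hcard j i') ⟨i', rfl⟩ :=
      ordMap_congr (b j) a (b j i) (hcard j i) hcc rfl
    have h3 := ordMap_inj (b j) a (b j i) (hcard j i) (s := ⟨i, rfl⟩)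
      (s' := ⟨i', hcc.symm⟩) (by rw [h2]; exact hxy)
    have : i = i' := congrArg Subtype.val h3
    simp [this]
  have hbij : Function.Bijective f :=
    (Fintype.bijective_iff_injective_and_card f).2 ⟨hinj, Fintype.card_congr τ⟩
  set σ : (Σ j : Fin m, Fin (k j)) ≃ Fin N := Equiv.ofBijective f hbij with hσ
  have hσa : ∀ j i, a (σ ⟨j, i⟩) = b j i := hfa
  have hσmono : ∀ (j : Fin m) (i i' : Fin (k j)), i < i' → b j i = b j i' →
      σ ⟨j, i⟩ < σ ⟨j, i'⟩ := by
    intro j i i' hlt hcc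
    have h2 : ordMap (b j) a (b j i) (hcard j i) ⟨i', hcc.symm⟩
        = ordMap (b j) a (b j i') (hcard j i') ⟨i', rfl⟩ :=
      ordMap_congr (b j) a (b j i) (hcard j i) hcc rfl
    show f ⟨j, i⟩ < f ⟨j, i'⟩
    rw [hf]
    dsimp only
    rw [← h2]
    exact ordMap_strictMono (b j) a (b j i) (hcard j i) hlt
  -- uniqueness
  have key : ∀ (ρ ρ' : (Σ j : Fin m, Fin (k j)) ≃ Fin N),
      ((∀ j i, a (ρ ⟨j, i⟩) = b j i) ∧
        (∀ (j : Fin m) (i i' : Fin (k j)), i < i' → b j i = b j i' →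
          ρ ⟨j, i⟩ < ρ ⟨j, i'⟩)) →
      ((∀ j i, a (ρ' ⟨j, i⟩) = b j i) ∧
        (∀ (j : Fin m) (i i' : Fin (k j)), i < i' → b j i = b j i' →
          ρ' ⟨j, i⟩ < ρ' ⟨j, i'⟩)) → ρ = ρ' := by
    rintro ρ ρ' ⟨hc, hm⟩ ⟨hc', hm'⟩
    apply Equiv.ext
    rintro ⟨j, i⟩
    set g : {i' : Fin (k j) // b j i' = b j i} → Fin N := fun s => ρ ⟨j, s.1⟩ with hg
    set g' : {i' : Fin (k j) // b j i' = b j i} → Fin N := fun s => ρ' ⟨j, s.1⟩ with hg'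
    have hrange : ∀ (ρ₀ : (Σ j : Fin m, Fin (k j)) ≃ Fin N),
        (∀ j i, a (ρ₀ ⟨j, i⟩) = b j i) →
        Set.range (fun s : {i' : Fin (k j) // b j i' = b j i} => ρ₀ ⟨j, s.1⟩)
          = {p : Fin N | a p = b j i} := by
      intro ρ₀ hc₀
      ext p
      constructor
      · rintro ⟨s, rfl⟩
        show a (ρ₀ ⟨j, s.1⟩) = b j i
        rw [hc₀ j s.1, s.2]
      · intro hp
        obtain ⟨⟨j', i'⟩, hx⟩ : ∃ x, ρ₀ x = p := ⟨ρ₀.symm p, ρ₀.apply_symm_apply p⟩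
        have hb : b j' i' = b j i := by rw [← hc₀ j' i', hx]; exact hp
        obtain rfl := hblock j' j i' i hb
        exact ⟨⟨i', hb⟩, hx⟩
    have hgm : StrictMono g := by
      rintro ⟨s, hs⟩ ⟨s', hs'⟩ hss
      exact hm j s s' (Subtype.mk_lt_mk.mp hss) (hs.trans hs'.symm)
    have hgm' : StrictMono g' := by
      rintro ⟨s, hs⟩ ⟨s', hs'⟩ hss
      exact hm' j s s' (Subtype.mk_lt_mk.mp hss) (hs.trans hs'.symm)
    haveI : WellFoundedLT {i' : Fin (k j) // b j i' = b j i} :=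
      Finite.to_wellFoundedLT
    have heq : g = g' := (hgm.range_inj hgm').1
      ((hrange ρ hc).trans (hrange ρ' hc').symm)
    exact congrFun heq ⟨i, rfl⟩
  exact ⟨σ, ⟨hσa, hσmono⟩, fun ρ hρ => key ρ σ hρ ⟨hσa, hσmono⟩⟩
end

section
/- In the category of monoids in a monoidal category (M, ⊗, I), the forgetful functor to M creates reflexive coequalizers: if a reflexive pair of monoid homomorphisms has a coequalizer in M that is preserved by tensoring (which holds when ⊗ preserves reflexive coequalizers in each variable), then that coequalizer carries a unique monoid structure making it the coequalizer in the category of monoids. -/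
/-!
Let `π : B ⟶ Q` be the coequalizer in `M` of the reflexive pair `f, g` of monoid maps. Composing
with the common sections splits the relation `(f ⊗ f) ≫ μ ≫ π = (g ⊗ g) ≫ μ ≫ π` into one
relation in each tensor factor, so `μ ≫ π` descends first along `B ◁ π` and then along `π ▷ Q`
to a multiplication on `Q`. Whiskerings of coequalizers of reflexive pairs are again such
coequalizers, hence `π ⊗ π` and `(π ⊗ π) ⊗ π` are epimorphisms: the monoid axioms on `Q`, and
the fact that the maps out of `Q` induced by monoid maps are monoid maps, can be checked after
precomposing with them.
-/

open CategoryTheory CategoryTheory.Limits CategoryTheory.MonoidalCategory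
open scoped CategoryTheory.MonObj
open CategoryTheory.Monad (PreservesColimitOfIsReflexivePair)

namespace CategoryTheory

theorem IsReflexivePair.map {C D : Type*} [Category C] [Category D] (F : C ⥤ D) {A B : C}
    (f g : A ⟶ B) [IsReflexivePair f g] : IsReflexivePair (F.map f) (F.map g) :=
  .mk' (F.map (commonSection f g)) (by simp [← F.map_comp]) (by simp [← F.map_comp])

section ReflexiveCoequalizer

variable {C : Type*} [Category C]

def IsReflexiveCoequalizer {B Q : C} (π : B ⟶ Q) : Prop :=
  ∃ (A : C) (f g : A ⟶ B) (w : f ≫ π = g ≫ π),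
    IsReflexivePair f g ∧ Nonempty (IsColimit (Cofork.ofπ π w))

namespace IsReflexiveCoequalizer

variable {A B Q : C} {π : B ⟶ Q}

theorem of_isColimit {f g : A ⟶ B} [IsReflexivePair f g] {w : f ≫ π = g ≫ π}
    (t : IsColimit (Cofork.ofπ π w)) : IsReflexiveCoequalizer π :=
  ⟨A, f, g, w, inferInstance, ⟨t⟩⟩

theorem epi (h : IsReflexiveCoequalizer π) : Epi π := by
  obtain ⟨_, _, _, _, _, ⟨t⟩⟩ := h
  exact epi_of_isColimit_cofork t

theorem map {D : Type*} [Category D] (F : C ⥤ D) [PreservesColimitOfIsReflexivePair F]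
    (h : IsReflexiveCoequalizer π) : IsReflexiveCoequalizer (F.map π) := by
  obtain ⟨_, f, g, w, _, ⟨t⟩⟩ := h
  have := IsReflexivePair.map F f g
  exact of_isColimit (isColimitCoforkMapOfIsColimit F w t)

variable [MonoidalCategory C]

theorem whiskerLeft [∀ X : C, PreservesColimitOfIsReflexivePair (tensorLeft X)]
    (h : IsReflexiveCoequalizer π) (X : C) : IsReflexiveCoequalizer (X ◁ π) :=
  h.map (tensorLeft X)

theorem whiskerRight [∀ X : C, PreservesColimitOfIsReflexivePair (tensorRight X)]
    (h : IsReflexiveCoequalizer π) (X : C) : IsReflexiveCoequalizer (π ▷ X) :=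
  h.map (tensorRight X)

variable [∀ X : C, PreservesColimitOfIsReflexivePair (tensorLeft X)]
  [∀ X : C, PreservesColimitOfIsReflexivePair (tensorRight X)]

theorem epi_tensorHom {B' Q' : C} {π' : B' ⟶ Q'} (h : IsReflexiveCoequalizer π)
    (h' : IsReflexiveCoequalizer π') : Epi (π ⊗ₘ π') := by
  have := (h.whiskerRight B').epi
  have := (h'.whiskerLeft Q).epi
  rw [MonoidalCategory.tensorHom_def]
  infer_instance

theorem epi_tensorHom_tensorHom {B' Q' B'' Q'' : C} {π' : B' ⟶ Q'} {π'' : B'' ⟶ Q''}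
    (h : IsReflexiveCoequalizer π) (h' : IsReflexiveCoequalizer π')
    (h'' : IsReflexiveCoequalizer π'') : Epi ((π ⊗ₘ π') ⊗ₘ π'') := by
  have := ((h.whiskerRight B').whiskerRight B'').epi
  have := ((h'.whiskerLeft Q).whiskerRight B'').epi
  have := (h''.whiskerLeft (Q ⊗ Q')).epi
  rw [MonoidalCategory.tensorHom_def, MonoidalCategory.tensorHom_def, comp_whiskerRight]
  infer_instance

end IsReflexiveCoequalizer

variable [MonoidalCategory C] [∀ X : C, PreservesColimitOfIsReflexivePair (tensorLeft X)]
  [∀ X : C, PreservesColimitOfIsReflexivePair (tensorRight X)]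

theorem exists_tensorHom_comp_eq_of_isColimit {A B Q A' B' Q' Z : C}
    {f g : A ⟶ B} [IsReflexivePair f g] {π : B ⟶ Q} {w : f ≫ π = g ≫ π}
    (t : IsColimit (Cofork.ofπ π w))
    {f' g' : A' ⟶ B'} [IsReflexivePair f' g'] {π' : B' ⟶ Q'} {w' : f' ≫ π' = g' ≫ π'}
    (t' : IsColimit (Cofork.ofπ π' w'))
    (h : B ⊗ B' ⟶ Z) (hh : (f ⊗ₘ f') ≫ h = (g ⊗ₘ g') ≫ h) :
    ∃ k : Q ⊗ Q' ⟶ Z, (π ⊗ₘ π') ≫ k = h := by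
  have hLeft : (B ◁ f') ≫ h = (B ◁ g') ≫ h := by
    simpa only [tensorHom_comp_tensorHom_assoc, section_comp_left, section_comp_right,
      Category.id_comp, id_tensorHom] using congr((commonSection f g ⊗ₘ 𝟙 A') ≫ $hh)
  have hRight : (f ▷ B') ≫ h = (g ▷ B') ≫ h := by
    simpa only [tensorHom_comp_tensorHom_assoc, section_comp_left, section_comp_right,
      Category.id_comp, tensorHom_id] using congr((𝟙 A ⊗ₘ commonSection f' g') ≫ $hh)
  let tB := isColimitCoforkMapOfIsColimit (tensorLeft B) w' t'
  let k₁ : B ⊗ Q' ⟶ Z := Cofork.IsColimit.desc tB h hLeft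
  have hk₁ : (B ◁ π') ≫ k₁ = h := Cofork.IsColimit.π_desc' tB h hLeft
  have := ((IsReflexiveCoequalizer.of_isColimit t').whiskerLeft A).epi
  have hk₁' : (f ▷ Q') ≫ k₁ = (g ▷ Q') ≫ k₁ := by
    rw [← cancel_epi (A ◁ π'), whisker_exchange_assoc, whisker_exchange_assoc, hk₁, hRight]
  let tQ := isColimitCoforkMapOfIsColimit (tensorRight Q') w t
  let k : Q ⊗ Q' ⟶ Z := Cofork.IsColimit.desc tQ k₁ hk₁'
  have hk : (π ▷ Q') ≫ k = k₁ := Cofork.IsColimit.π_desc' tQ k₁ hk₁'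
  exact ⟨k, by rw [tensorHom_def', Category.assoc, hk, hk₁]⟩

end ReflexiveCoequalizer

section MonObj

variable {C : Type*} [Category C] [MonoidalCategory C]

abbrev MonObj.ofEpi {X Y : C} [MonObj X] (π : X ⟶ Y) [Epi π] [Epi ((π ⊗ₘ π) ⊗ₘ π)]
    (m : Y ⊗ Y ⟶ Y) (hm : (π ⊗ₘ π) ≫ m = μ ≫ π) : MonObj Y where
  one := η ≫ π
  mul := m
  one_mul := by
    have : Epi (𝟙_ C ◁ π) := by
      rw [← Iso.hom_inv_id_assoc (λ_ X) (𝟙_ C ◁ π), ← leftUnitor_inv_naturality]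
      infer_instance
    rw [← cancel_epi (𝟙_ C ◁ π), ← tensorHom_def'_assoc, ← whiskerRight_comp_tensorHom_assoc,
      hm, MonObj.one_mul_assoc, leftUnitor_naturality]
  mul_one := by
    have : Epi (π ▷ 𝟙_ C) := by
      rw [← Iso.hom_inv_id_assoc (ρ_ X) (π ▷ 𝟙_ C), ← rightUnitor_inv_naturality]
      infer_instance
    rw [← cancel_epi (π ▷ 𝟙_ C), ← MonoidalCategory.tensorHom_def_assoc,
      ← whiskerLeft_comp_tensorHom_assoc, hm, MonObj.mul_one_assoc, rightUnitor_naturality]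
  mul_assoc := by
    rw [← cancel_epi ((π ⊗ₘ π) ⊗ₘ π), tensorHom_comp_whiskerRight_assoc, hm,
      ← whiskerRight_comp_tensorHom_assoc, hm, associator_naturality_assoc,
      tensorHom_comp_whiskerLeft_assoc, hm, ← whiskerLeft_comp_tensorHom_assoc, hm,
      MonObj.mul_assoc_assoc]

theorem MonObj.isMonHom_ofEpi {X Y : C} [MonObj X] (π : X ⟶ Y) [Epi π] [Epi ((π ⊗ₘ π) ⊗ₘ π)]
    (m : Y ⊗ Y ⟶ Y) (hm : (π ⊗ₘ π) ≫ m = μ ≫ π) :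
    let := MonObj.ofEpi π m hm
    IsMonHom π :=
  let := MonObj.ofEpi π m hm
  ⟨rfl, hm.symm⟩

theorem IsMonHom.of_epi_comp {X Y Z : C} [MonObj X] [MonObj Y] [MonObj Z] (π : X ⟶ Y)
    [IsMonHom π] [Epi (π ⊗ₘ π)] (k : Y ⟶ Z) [IsMonHom (π ≫ k)] : IsMonHom k where
  one_hom := by rw [← IsMonHom.one_hom π, Category.assoc, IsMonHom.one_hom]
  mul_hom := by
    rw [← cancel_epi (π ⊗ₘ π), ← IsMonHom.mul_hom_assoc, IsMonHom.mul_hom (π ≫ k),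
      tensorHom_comp_tensorHom_assoc]

end MonObj

def Mon.isColimitCoforkOfIsColimitForget {C : Type*} [Category C] [MonoidalCategory C]
    {A B Q : Mon C} {f g : A ⟶ B} {π : B ⟶ Q} (w : f ≫ π = g ≫ π) [Epi (π.hom ⊗ₘ π.hom)]
    (t : IsColimit ((Mon.forget C).mapCocone (Cofork.ofπ π w))) : IsColimit (Cofork.ofπ π w) :=
  let t' := isColimitMapCoconeCoforkEquiv (Mon.forget C) w t
  Cofork.IsColimit.mk' _ fun s =>
    have hs : f.hom ≫ s.π.hom = g.hom ≫ s.π.hom := congr_arg Hom.hom s.condition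
    let l := Cofork.IsColimit.desc t' s.π.hom hs
    have hl : π.hom ≫ l = s.π.hom := Cofork.IsColimit.π_desc' t' _ hs
    have : IsMonHom (π.hom ≫ l) := hl ▸ inferInstance
    have := IsMonHom.of_epi_comp π.hom l
    ⟨Hom.mk l, Hom.ext hl, fun hm =>
      Hom.ext (Cofork.IsColimit.hom_ext t' ((congr_arg Hom.hom hm).trans hl.symm))⟩

end CategoryTheory

/-- In the category of monoids in a monoidal category `(M, ⊗, I)`, the forgetful functor
to `M` creates reflexive coequalizers: if the tensor product preserves coequalizers of
reflexive pairs in each variable separately, and a reflexive pair of monoid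
homomorphisms has a coequalizer of its underlying pair in `M`, then that coequalizer
carries a (unique) monoid structure making it the coequalizer in the category of
monoids — i.e., the forgetful functor creates the colimit of the pair. -/
theorem stmt8 {M : Type*} [Category M] [MonoidalCategory M]
    (hL : ∀ (X : M) {A B : M} (f g : A ⟶ B), IsReflexivePair f g →
      Nonempty (PreservesColimit (parallelPair f g) (tensorLeft X)))
    (hR : ∀ (X : M) {A B : M} (f g : A ⟶ B), IsReflexivePair f g →
      Nonempty (PreservesColimit (parallelPair f g) (tensorRight X)))
    {A B : Mon M} (f g : A ⟶ B) (hfg : IsReflexivePair f g)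
    (hcoeq : HasCoequalizer f.hom g.hom) :
    Nonempty (CreatesColimit (parallelPair f g) (Mon.forget M)) := by
  have := hfg
  have (X : M) : PreservesColimitOfIsReflexivePair (tensorLeft X) :=
    ⟨fun _ _ f g h => (hL X f g h).some⟩
  have (X : M) : PreservesColimitOfIsReflexivePair (tensorRight X) :=
    ⟨fun _ _ f g h => (hR X f g h).some⟩
  have : IsReflexivePair f.hom g.hom := IsReflexivePair.map (Mon.forget M) f g
  let π := coequalizer.π f.hom g.hom
  have t := coequalizerIsCoequalizer f.hom g.hom
  have hπ : IsReflexiveCoequalizer π := .of_isColimit t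
  have := hπ.epi
  have := hπ.epi_tensorHom hπ
  have := hπ.epi_tensorHom_tensorHom hπ hπ
  obtain ⟨m, hm⟩ := exists_tensorHom_comp_eq_of_isColimit t t (μ[B.X] ≫ π) (by
    rw [← IsMonHom.mul_hom_assoc, ← IsMonHom.mul_hom_assoc, coequalizer.condition])
  let := MonObj.ofEpi π m hm
  have := MonObj.isMonHom_ofEpi π m hm
  let πMon : B ⟶ Mon.mk (coequalizer f.hom g.hom) := Mon.Hom.mk π
  have w : f ≫ πMon = g ≫ πMon := Mon.Hom.ext (coequalizer.condition f.hom g.hom)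
  have hc : IsColimit ((Mon.forget M).mapCocone (Cofork.ofπ πMon w)) :=
    (isColimitMapCoconeCoforkEquiv _ w).symm t
  exact ⟨createsColimitOfReflectsIso' hc
    ⟨⟨_, Iso.refl _⟩, Mon.isColimitCoforkOfIsColimitForget w hc⟩⟩
end
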